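/- Let φ(v) = v²/2 − log v on (0,∞), let c > 1/2, and let c₁ ∈ (0,1) and c₂ ∈ (1,∞) be the two roots of φ(v) = c. Then √2·∫_{c₁}^{c₂} dv/√(c − φ(v)) ≥ 2√2·(√(c₁/(1+c₁)) + √(c₂/(1+c₂))). -/

import Mathlib

/-!
The potential `φ = potential` is convex, so `c - φ` lies below its tangent lines at the two roots:
`c - φ v ≤ (c₁⁻¹ - c₁) (v - c₁)` and `c - φ v ≤ (c₂ - c₂⁻¹) (c₂ - v)`. Hence on `[c₁, 1]` and on
`[1, c₂]` the integrand dominates `1 / √(K (v - c₁))`, resp. `1 / √(K (c₂ - v))`, whose integrals are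
`2 √(c₁ / (1 + c₁))` and `2 √(c₂ / (1 + c₂))`. The integrand is integrable because, by concavity
of `log`, `c - φ v ≥ (v - c₁) (c₂ - v) / 2` on `[c₁, c₂]`.
-/

open Real intervalIntegral MeasureTheory Set

section InverseSqrt

variable {a b K : ℝ}

lemma hasDerivAt_two_mul_sqrt_sub_div_sqrt (hK : 0 < K) {v : ℝ} (hv : a < v) :
    HasDerivAt (fun v => 2 * √(v - a) / √K) (1 / √(K * (v - a))) v := by
  have hva : 0 < v - a := sub_pos.2 hv
  refine ((((hasDerivAt_id v).sub_const a).sqrt hva.ne').const_mul 2).div_const _ |>.congr_deriv ?_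
  rw [id, sqrt_mul hK.le]
  field_simp

lemma intervalIntegrable_inv_sqrt_mul_sub (hab : a ≤ b) (hK : 0 < K) :
    IntervalIntegrable (fun v => 1 / √(K * (v - a))) volume a b :=
  (intervalIntegrable_iff_integrableOn_Ioc_of_le hab).2 <|
    integrableOn_deriv_of_nonneg (by fun_prop)
      (fun _ hv => hasDerivAt_two_mul_sqrt_sub_div_sqrt hK hv.1) fun _ _ => by positivity

lemma integral_inv_sqrt_mul_sub (hab : a ≤ b) (hK : 0 < K) :
    ∫ v in a..b, 1 / √(K * (v - a)) = 2 * √(b - a) / √K := by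
  rw [integral_eq_sub_of_hasDerivAt_of_le hab (by fun_prop)
    (fun _ hv => hasDerivAt_two_mul_sqrt_sub_div_sqrt hK hv.1)
    (intervalIntegrable_inv_sqrt_mul_sub hab hK)]
  simp

variable {f : ℝ → ℝ}

lemma intervalIntegrable_inv_sqrt_of_mul_sub_le (hf : Measurable f) (hab : a ≤ b) (hK : 0 < K)
    (hge : ∀ v ∈ Ioo a b, K * (v - a) ≤ f v) :
    IntervalIntegrable (fun v => 1 / √(f v)) volume a b := by
  rw [intervalIntegrable_iff_integrableOn_Ioo_of_le hab]
  refine ((intervalIntegrable_iff_integrableOn_Ioo_of_le hab).1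
    (intervalIntegrable_inv_sqrt_mul_sub hab hK)).mono'
    (hf.sqrt.const_div 1).aestronglyMeasurable ?_
  filter_upwards [ae_restrict_mem measurableSet_Ioo] with v hv
  have : 0 < K * (v - a) := mul_pos hK (sub_pos.2 hv.1)
  rw [norm_of_nonneg (by positivity)]
  exact one_div_le_one_div_of_le (sqrt_pos.2 this) (sqrt_le_sqrt (hge v hv))

lemma le_integral_inv_sqrt_of_le_mul_sub (hab : a ≤ b) (hK : 0 < K)
    (hf : IntervalIntegrable (fun v => 1 / √(f v)) volume a b)
    (hpos : ∀ v ∈ Ioo a b, 0 < f v) (hle : ∀ v ∈ Ioo a b, f v ≤ K * (v - a)) :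
    2 * √(b - a) / √K ≤ ∫ v in a..b, 1 / √(f v) := by
  rw [← integral_inv_sqrt_mul_sub hab hK]
  exact integral_mono_on_of_le_Ioo hab (intervalIntegrable_inv_sqrt_mul_sub hab hK) hf
    fun v hv => one_div_le_one_div_of_le (sqrt_pos.2 (hpos v hv)) (sqrt_le_sqrt (hle v hv))

lemma intervalIntegrable_inv_sqrt_of_mul_sub_le' (hf : Measurable f) (hab : a ≤ b) (hK : 0 < K)
    (hge : ∀ v ∈ Ioo a b, K * (b - v) ≤ f v) :
    IntervalIntegrable (fun v => 1 / √(f v)) volume a b := by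
  have := (intervalIntegrable_inv_sqrt_of_mul_sub_le (f := fun v => f (a + b - v))
    (by fun_prop) hab hK fun v hv => ?_).comp_sub_left (a + b)
  · simpa using this.symm
  · convert hge (a + b - v) ⟨by linarith [hv.2], by linarith [hv.1]⟩ using 2; ring

lemma le_integral_inv_sqrt_of_le_mul_sub' (hab : a ≤ b) (hK : 0 < K)
    (hf : IntervalIntegrable (fun v => 1 / √(f v)) volume a b)
    (hpos : ∀ v ∈ Ioo a b, 0 < f v) (hle : ∀ v ∈ Ioo a b, f v ≤ K * (b - v)) :
    2 * √(b - a) / √K ≤ ∫ v in a..b, 1 / √(f v) := by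
  have hmem : ∀ v ∈ Ioo a b, a + b - v ∈ Ioo a b := fun v hv =>
    ⟨by linarith [hv.2], by linarith [hv.1]⟩
  have := le_integral_inv_sqrt_of_le_mul_sub (f := fun v => f (a + b - v)) hab hK
    (by simpa using (hf.comp_sub_left (a + b)).symm) (fun v hv => hpos _ (hmem v hv))
    fun v hv => by convert hle _ (hmem v hv) using 2; ring
  rwa [integral_comp_sub_left (fun v => 1 / √(f v)), add_sub_cancel_right,
    add_sub_cancel_left] at this

end InverseSqrt

noncomputable def potential (v : ℝ) : ℝ := v ^ 2 / 2 - log v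

section Potential

variable {a b c v : ℝ}

lemma measurable_potential : Measurable potential := by
  unfold potential; fun_prop

lemma sub_potential_le_mul_sub (ha : 0 < a) (hv : 0 < v) (hac : potential a = c) :
    c - potential v ≤ (a⁻¹ - a) * (v - a) := by
  have hlog := log_le_sub_one_of_pos (div_pos hv ha)
  rw [log_div hv.ne' ha.ne', div_eq_inv_mul] at hlog
  have : a⁻¹ * a = 1 := inv_mul_cancel₀ ha.ne'
  unfold potential at hac ⊢
  nlinarith [sq_nonneg (v - a)]

lemma mul_sub_le_sub_potential (ha : 0 < a) (hab : a < b) (hac : potential a = c)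
    (hbc : potential b = c) (hv : v ∈ Icc a b) :
    (v - a) * (b - v) / 2 ≤ c - potential v := by
  have hba : 0 < b - a := sub_pos.2 hab
  have hchord := strictConcaveOn_log_Ioi.concaveOn.2 (show a ∈ Ioi 0 from ha)
    (show b ∈ Ioi 0 from ha.trans hab) (div_nonneg (sub_nonneg.2 hv.2) hba.le)
    (div_nonneg (sub_nonneg.2 hv.1) hba.le) (by field_simp; ring)
  have hv' : (b - v) / (b - a) * a + (v - a) / (b - a) * b = v := by
    field_simp; ring
  simp only [smul_eq_mul, hv'] at hchord
  have hlog : (b - v) * log a + (v - a) * log b ≤ (b - a) * log v := by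
    have := mul_le_mul_of_nonneg_left hchord hba.le
    field_simp at this
    linarith
  unfold potential at hac hbc ⊢
  refine le_of_mul_le_mul_left ?_ hba
  rw [show log a = a ^ 2 / 2 - c by linarith, show log b = b ^ 2 / 2 - c by linarith] at hlog
  linear_combination hlog

lemma sub_potential_pos (ha : 0 < a) (hac : potential a = c) (hbc : potential b = c)
    (hv : v ∈ Ioo a b) : 0 < c - potential v :=
  (div_pos (mul_pos (sub_pos.2 hv.1) (sub_pos.2 hv.2)) two_pos).trans_le
    (mul_sub_le_sub_potential ha (hv.1.trans hv.2) hac hbc (Ioo_subset_Icc_self hv))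

end Potential

section PeriodIntegral

variable {a b c : ℝ}

lemma intervalIntegrable_inv_sqrt_sub_potential (ha : 0 < a) (hab : a < b)
    (hac : potential a = c) (hbc : potential b = c) :
    IntervalIntegrable (fun v => 1 / √(c - potential v)) volume a b := by
  have hmeas : Measurable fun v => c - potential v := measurable_const.sub measurable_potential
  obtain ⟨m, ham, hmb⟩ := exists_between hab
  have hlow := fun v (hv : v ∈ Icc a b) => mul_sub_le_sub_potential ha hab hac hbc hv
  refine (intervalIntegrable_inv_sqrt_of_mul_sub_le hmeas ham.le (K := (b - m) / 2)
    (by linarith) fun v hv => ?_).trans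
    (intervalIntegrable_inv_sqrt_of_mul_sub_le' hmeas hmb.le (K := (m - a) / 2)
    (by linarith) fun v hv => ?_)
  · nlinarith [hlow v ⟨hv.1.le, by linarith [hv.2]⟩, hv.1, hv.2]
  · nlinarith [hlow v ⟨by linarith [hv.1], hv.2.le⟩, hv.1, hv.2]

lemma two_mul_sqrt_le_integral_inv_sqrt_sub_potential_left (ha : 0 < a) (ha1 : a < 1)
    (hb1 : 1 < b) (hac : potential a = c) (hbc : potential b = c) :
    2 * √(a / (1 + a)) ≤ ∫ v in a..1, 1 / √(c - potential v) := by
  have hK : 0 < a⁻¹ - a := sub_pos.2 (ha1.trans (one_lt_inv₀ ha |>.2 ha1))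
  have hconst : 2 * √(a / (1 + a)) = 2 * √(1 - a) / √(a⁻¹ - a) := by
    rw [mul_div_assoc, ← sqrt_div' _ hK.le]
    congr 2
    rw [div_eq_div_iff (by positivity) hK.ne']
    field_simp
    ring
  rw [hconst]
  refine le_integral_inv_sqrt_of_le_mul_sub ha1.le hK
    ((intervalIntegrable_inv_sqrt_sub_potential ha (ha1.trans hb1) hac hbc).mono_set ?_)
    (fun v hv => sub_potential_pos ha hac hbc ⟨hv.1, hv.2.trans hb1⟩)
    (fun v hv => sub_potential_le_mul_sub ha (ha.trans hv.1) hac)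
  rw [uIcc_of_le ha1.le, uIcc_of_le (ha1.trans hb1).le]
  exact Icc_subset_Icc_right hb1.le

lemma two_mul_sqrt_le_integral_inv_sqrt_sub_potential_right (ha : 0 < a) (ha1 : a < 1)
    (hb1 : 1 < b) (hac : potential a = c) (hbc : potential b = c) :
    2 * √(b / (1 + b)) ≤ ∫ v in (1 : ℝ)..b, 1 / √(c - potential v) := by
  have hb : 0 < b := one_pos.trans hb1
  have hK : 0 < b - b⁻¹ := sub_pos.2 ((inv_lt_one₀ hb |>.2 hb1).trans hb1)
  have hconst : 2 * √(b / (1 + b)) = 2 * √(b - 1) / √(b - b⁻¹) := by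
    rw [mul_div_assoc, ← sqrt_div' _ hK.le]
    congr 2
    rw [div_eq_div_iff (by positivity) hK.ne']
    field_simp
    ring
  rw [hconst]
  refine le_integral_inv_sqrt_of_le_mul_sub' hb1.le hK
    ((intervalIntegrable_inv_sqrt_sub_potential ha (ha1.trans hb1) hac hbc).mono_set ?_)
    (fun v hv => sub_potential_pos ha hac hbc ⟨ha1.trans hv.1, hv.2⟩)
    (fun v hv => (sub_potential_le_mul_sub hb (one_pos.trans hv.1) hbc).trans_eq (by ring))
  rw [uIcc_of_le hb1.le, uIcc_of_le (ha1.trans hb1).le]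
  exact Icc_subset_Icc_left ha1.le

end PeriodIntegral

theorem stmt_10 (c c₁ c₂ : ℝ)
    (hc₁ : c₁ ∈ Set.Ioo (0:ℝ) 1) (hc₂ : c₂ ∈ Set.Ioi (1:ℝ))
    (hφ₁ : c₁ ^ 2 / 2 - Real.log c₁ = c) (hφ₂ : c₂ ^ 2 / 2 - Real.log c₂ = c) :
    Real.sqrt 2 * ∫ v in c₁..c₂, 1 / Real.sqrt (c - (v ^ 2 / 2 - Real.log v)) ≥
      2 * Real.sqrt 2 *
        (Real.sqrt (c₁ / (1 + c₁)) + Real.sqrt (c₂ / (1 + c₂))) := by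
  obtain ⟨h0c₁, hc₁1⟩ := hc₁
  have hint := intervalIntegrable_inv_sqrt_sub_potential h0c₁ (hc₁1.trans hc₂) hφ₁ hφ₂
  have hleft := two_mul_sqrt_le_integral_inv_sqrt_sub_potential_left h0c₁ hc₁1 hc₂ hφ₁ hφ₂
  have hright := two_mul_sqrt_le_integral_inv_sqrt_sub_potential_right h0c₁ hc₁1 hc₂ hφ₁ hφ₂
  change _ ≤ √2 * ∫ v in c₁..c₂, 1 / √(c - potential v)
  have h1 : (1 : ℝ) ∈ uIcc c₁ c₂ := by rw [uIcc_of_le (hc₁1.trans hc₂).le]; exact ⟨hc₁1.le, hc₂.le⟩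
  rw [← integral_add_adjacent_intervals (hint.mono_set (uIcc_subset_uIcc left_mem_uIcc h1))
    (hint.mono_set (uIcc_subset_uIcc h1 right_mem_uIcc))]
  nlinarith [sqrt_nonneg 2]
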